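/- Let p be a STRIPS₁¹ instance on n variables in which no action has precondition equal to the negation of its effect. Then for all states s_I, s_G: the state s_G is reachable from s_I by some plan of p if and only if the marking m_{s_G} is reachable from the marking m_{s_I} by some firing sequence of the associated Petri-net transitions. -/

import Mathlib

/-- A literal over `n` propositional variables: a variable together with a Boolean sign. -/
abbrev Lit (n : ℕ) : Type := Fin n × Bool

/-- A state: a truth assignment to the `n` variables. -/
abbrev State (n : ℕ) : Type := Fin n → Bool

/-- The negation of a literal. -/
def Lit.neg {n : ℕ} (l : Lit n) : Lit n := (l.1, !l.2)

/-- A literal holds in a state iff the state assigns it its sign. -/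
def Holds {n : ℕ} (s : State n) (l : Lit n) : Prop := s l.1 = l.2

/-- `s ⊕ l`: the state agreeing with `s` except variable `l.1` is set to `l.2`. -/
def applyLit {n : ℕ} (s : State n) (l : Lit n) : State n :=
  Function.update s l.1 l.2

/-- A STRIPS₁¹ action (Act): a pair (precondition, effect) of literals. -/
abbrev Act (n : ℕ) : Type := Lit n × Lit n

/-- Edge of the induced graph `Q_n(p)`. -/
def Edge {n : ℕ} (A : Finset (Act n)) (s s' : State n) : Prop :=
  ∃ a ∈ A, Holds s a.1 ∧ s' = applyLit s a.2 ∧ s' ≠ s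

/-- `{s₁, s₂}` is a bidirectional edge: edges in both directions. -/
def BidirEdge {n : ℕ} (A : Finset (Act n)) (s₁ s₂ : State n) : Prop :=
  Edge A s₁ s₂ ∧ Edge A s₂ s₁

/-- The set of bidirectional edges of `Q_n(p)`, as unordered pairs of states. -/
def bidirEdges {n : ℕ} (A : Finset (Act n)) : Set (Sym2 (State n)) :=
  {e | ∃ s₁ s₂, e = s(s₁, s₂) ∧ BidirEdge A s₁ s₂}

/-- The set of bidirectional edges of `Q_n(p)` in coordinate `v`:
the two endpoints differ exactly in the variable `v`. -/
def bidirEdgesIn {n : ℕ} (A : Finset (Act n)) (v : Fin n) : Set (Sym2 (State n)) :=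
  {e | ∃ s₁ s₂, e = s(s₁, s₂) ∧ BidirEdge A s₁ s₂ ∧
    s₁ v ≠ s₂ v ∧ ∀ w : Fin n, w ≠ v → s₁ w = s₂ w}

/-- A good instance: each variable has a positive and a negative achiever
whose preconditions are not each other's negation. -/
def Good {n : ℕ} (A : Finset (Act n)) : Prop :=
  ∀ v : Fin n, ∃ a ∈ A, ∃ b ∈ A,
    a.2 = (v, true) ∧ b.2 = (v, false) ∧ a.1 ≠ Lit.neg b.1

/-- The state obtained by applying the effects of a list of actions to `s`. -/
def execStates {n : ℕ} (s : State n) (ω : List (Act n)) : State n :=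
  ω.foldl (fun t a => applyLit t a.2) s

/-- `ω` is a plan from `sI` to `sG` for the instance with actions `A`. -/
def IsPlan {n : ℕ} (A : Finset (Act n)) (sI sG : State n) (ω : List (Act n)) : Prop :=
  (∀ i : Fin ω.length, ω.get i ∈ A ∧ Holds (execStates sI (ω.take i)) (ω.get i).1) ∧
  execStates sI ω = sG

/-- `ω` is a shortest plan from `sI` to `sG`. -/
def IsShortestPlan {n : ℕ} (A : Finset (Act n)) (sI sG : State n)
    (ω : List (Act n)) : Prop :=
  IsPlan A sI sG ω ∧ ∀ ω', IsPlan A sI sG ω' → ω.length ≤ ω'.length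

/-- The plan `ω` started at `sI` visits the state `s`. -/
def Visits {n : ℕ} (sI : State n) (ω : List (Act n)) (s : State n) : Prop :=
  ∃ i ≤ ω.length, execStates sI (ω.take i) = s


/-- A Petri-net marking: a number of tokens on each literal place. -/
abbrev Marking (n : ℕ) : Type := Lit n → ℕ

/-- The marking associated to a state: one token on each literal holding in `s`. -/
def stateMarking {n : ℕ} (s : State n) : Marking n :=
  fun l => if s l.1 = l.2 then 1 else 0

/-- Firing the transition of action `a`: consume a token at the negated effect,
produce one at the effect (the token at the precondition is consumed and
immediately reproduced). -/
def fire {n : ℕ} (a : Act n) (m : Marking n) : Marking n :=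
  fun l => if l = Lit.neg a.2 then m l - 1 else if l = a.2 then m l + 1 else m l

/-- One firing step of the Petri net associated to the instance with actions `A`. -/
def FireStep {n : ℕ} (A : Finset (Act n)) (m m' : Marking n) : Prop :=
  ∃ a ∈ A, 1 ≤ m a.1 ∧ 1 ≤ m (Lit.neg a.2) ∧ m' = fire a m

section Aux

variable {n : ℕ}

def PStep (A : Finset (Act n)) (s s' : State n) : Prop :=
  ∃ a ∈ A, Holds s a.1 ∧ s' = applyLit s a.2

lemma execStates_cons (s : State n) (a : Act n) (ω : List (Act n)) :
    execStates s (a :: ω) = execStates (applyLit s a.2) ω := rfl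

lemma plan_to_rtg (A : Finset (Act n)) :
    ∀ ω (sI sG : State n), IsPlan A sI sG ω →
      Relation.ReflTransGen (PStep A) sI sG := by
  intro ω
  induction ω with
  | nil => intro sI sG h; simp [IsPlan, execStates] at h; rw [h]
  | cons a ω ih =>
    intro sI sG h
    obtain ⟨h1, h2⟩ := h
    have h0 := h1 ⟨0, by simp⟩
    simp [execStates] at h0
    refine Relation.ReflTransGen.head ⟨a, h0.1, h0.2, rfl⟩ (ih (applyLit sI a.2) sG ?_)
    constructor
    · intro i
      have := h1 i.succ
      simpa [List.get, execStates_cons] using this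
    · rw [← execStates_cons]; exact h2

lemma rtg_to_plan (A : Finset (Act n)) (sI sG : State n)
    (h : Relation.ReflTransGen (PStep A) sI sG) : ∃ ω, IsPlan A sI sG ω := by
  induction h using Relation.ReflTransGen.head_induction_on with
  | refl => exact ⟨[], fun i => absurd i.2 (by simp), rfl⟩
  | head hstep _ ih =>
    rename_i s s' _
    obtain ⟨a, ha, hh, hs'⟩ := hstep
    obtain ⟨ω, hω1, hω2⟩ := ih
    refine ⟨a :: ω, fun i => ?_, ?_⟩
    · refine Fin.cases ?_ ?_ i
      · simpa [execStates] using ⟨ha, hh⟩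
      · intro j
        have := hω1 j
        simpa [execStates_cons, hs'] using this
    · rw [execStates_cons, ← hs']; exact hω2

lemma stateMarking_holds (s : State n) (l : Lit n) (h : s l.1 = l.2) :
    stateMarking s l = 1 := by simp [stateMarking, h]

lemma fire_stateMarking (s : State n) (a : Act n) (h : s a.2.1 ≠ a.2.2) :
    fire a (stateMarking s) = stateMarking (applyLit s a.2) := by
  funext l
  simp only [fire, stateMarking, applyLit, Lit.neg]
  by_cases h1 : l = (a.2.1, !a.2.2)
  · subst h1
    simp only [if_pos rfl]
    have : s a.2.1 = !a.2.2 := by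
      cases hb : s a.2.1 <;> cases hb2 : a.2.2 <;> simp_all
    simp [this, Function.update_self]
  · simp only [h1, if_false]
    by_cases h2 : l = a.2
    · subst h2
      simp [h, Function.update_self]
    · rw [if_neg h2]
      by_cases h3 : l.1 = a.2.1
      · have : l.2 ≠ a.2.2 ∧ l.2 ≠ !a.2.2 → False := by
          intro ⟨x, y⟩; cases hb : l.2 <;> cases hb2 : a.2.2 <;> simp_all
        have hl2 : l.2 = a.2.2 ∨ l.2 = !a.2.2 := by
          by_contra hc; push_neg at hc; exact this hc
        rcases hl2 with hl2 | hl2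
        · exact absurd (Prod.ext h3 hl2) h2
        · exact absurd (show l = (a.2.1, !a.2.2) from Prod.ext h3 hl2) h1
      · simp [Function.update_of_ne h3]

lemma stateMarking_inj {s s' : State n} (h : stateMarking s = stateMarking s') :
    s = s' := by
  funext v
  have := congrFun h (v, s v)
  simp [stateMarking] at this
  by_contra hc
  exact hc this.symm

lemma pstep_to_fire (A : Finset (Act n)) {s s' : State n} (h : PStep A s s') :
    Relation.ReflTransGen (FireStep A) (stateMarking s) (stateMarking s') := by
  obtain ⟨a, ha, hh, hs'⟩ := h
  by_cases heff : s a.2.1 = a.2.2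
  · have : s' = s := by
      subst hs'; funext w
      by_cases hw : w = a.2.1
      · subst hw; simp [applyLit, heff]
      · simp [applyLit, Function.update_of_ne hw]
    rw [this]
  · refine Relation.ReflTransGen.single ⟨a, ha, ?_, ?_, ?_⟩
    · rw [stateMarking_holds s a.1 hh]
    · rw [stateMarking_holds s (Lit.neg a.2) (by
        simp only [Lit.neg]
        cases hb : s a.2.1 <;> cases hb2 : a.2.2 <;> simp_all)]
    · rw [hs', fire_stateMarking s a heff]

lemma fire_rtg_to_pstep (A : Finset (Act n)) (s : State n) (m' : Marking n)
    (h : Relation.ReflTransGen (FireStep A) (stateMarking s) m') :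
    ∃ s', m' = stateMarking s' ∧ Relation.ReflTransGen (PStep A) s s' := by
  induction h with
  | refl => exact ⟨s, rfl, Relation.ReflTransGen.refl⟩
  | tail _ hstep ih =>
    obtain ⟨t, rfl, ht⟩ := ih
    obtain ⟨a, ha, h1, h2, h3⟩ := hstep
    have hneg : t a.2.1 = !a.2.2 := by
      by_contra hc
      simp [stateMarking, Lit.neg, hc] at h2
    have heff : t a.2.1 ≠ a.2.2 := by
      rw [hneg]; cases a.2.2 <;> simp
    have hh : Holds t a.1 := by
      by_contra hc
      rw [Holds] at hc
      simp [stateMarking, hc] at h1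
    exact ⟨applyLit t a.2, by rw [h3, fire_stateMarking t a heff],
      ht.tail ⟨a, ha, hh, rfl⟩⟩

end Aux

/-- for an instance in which no action's precondition is the negation
of its effect, `s_G` is reachable from `s_I` by a plan iff the marking `m_{s_G}` is
reachable from `m_{s_I}` by a firing sequence of the associated Petri net. -/
theorem stmt14 {n : ℕ} (A : Finset (Act n)) (hA : ∀ a ∈ A, a.1 ≠ Lit.neg a.2)
    (sI sG : State n) :
    (∃ ω, IsPlan A sI sG ω) ↔
      Relation.ReflTransGen (FireStep A) (stateMarking sI) (stateMarking sG) := by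
  constructor
  · rintro ⟨ω, hω⟩
    have h := plan_to_rtg A ω sI sG hω
    clear hω
    induction h with
    | refl => rfl
    | tail _ hstep ih => exact ih.trans (pstep_to_fire A hstep)
  · intro h
    obtain ⟨s', hs', hrtg⟩ := fire_rtg_to_pstep A sI _ h
    rw [stateMarking_inj hs']
    exact rtg_to_plan A sI s' hrtg
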